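/- arXiv:2006.04006 — 5 statements merged into one kernel-verified Lean document; each statement's English description precedes it below -/
import Mathlib

section
/- For real numbers p, q ≥ 0 and integers k, l ≥ 0 with k + l = n, the image of the prismatic map μ^{k,l}_{p,q} : Δᵏ_p × Δˡ_q → Δⁿ_{p+q} is exactly the set {u ∈ Δⁿ_{p+q} : ∑_{i=0}^{k−1} uᵢ ≤ p ≤ ∑_{i=0}^{k} uᵢ}. -/
open Topology

/-- The scaled `n`-simplex `Δⁿ_p ⊆ ℝ^{n+1}`. -/
def SSimplex (n : ℕ) (p : ℝ) : Type :=
  {t : Fin (n + 1) → ℝ // (∀ i, 0 ≤ t i) ∧ ∑ i, t i = p}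

instance (n : ℕ) (p : ℝ) : TopologicalSpace (SSimplex n p) :=
  inferInstanceAs (TopologicalSpace {t : Fin (n + 1) → ℝ // (∀ i, 0 ≤ t i) ∧ ∑ i, t i = p})

/-- The underlying formula of the prismatic map:
`((s₀,…,s_k),(t₀,…,t_l)) ↦ (s₀,…,s_{k−1}, s_k + t₀, t₁,…,t_l)`. -/
def prismFun (k l : ℕ) (s : Fin (k + 1) → ℝ) (t : Fin (l + 1) → ℝ) :
    Fin (k + l + 1) → ℝ :=
  (Fin.append (Fin.init s) (Fin.cons (s (Fin.last k) + t 0) (Fin.tail t)) :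
    Fin (k + (l + 1)) → ℝ)

theorem prismFun_mem {k l : ℕ} {p q : ℝ} {s : Fin (k + 1) → ℝ} {t : Fin (l + 1) → ℝ}
    (hs : (∀ i, 0 ≤ s i) ∧ ∑ i, s i = p) (ht : (∀ i, 0 ≤ t i) ∧ ∑ i, t i = q) :
    (∀ i, 0 ≤ prismFun k l s t i) ∧ ∑ i, prismFun k l s t i = p + q := by
  have key : (∀ i : Fin (k + (l + 1)),
        0 ≤ Fin.append (Fin.init s) (Fin.cons (s (Fin.last k) + t 0) (Fin.tail t)) i) ∧
      ∑ i : Fin (k + (l + 1)),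
        Fin.append (Fin.init s) (Fin.cons (s (Fin.last k) + t 0) (Fin.tail t)) i = p + q := by
    constructor
    · intro i
      refine Fin.addCases (fun j => ?_) (fun j => ?_) i
      · rw [Fin.append_left]
        exact hs.1 _
      · rw [Fin.append_right]
        refine Fin.cases ?_ (fun j => ?_) j
        · simpa using add_nonneg (hs.1 _) (ht.1 _)
        · simpa [Fin.tail] using ht.1 _
    · rw [Fin.sum_univ_add]
      simp only [Fin.append_left, Fin.append_right]
      rw [Fin.sum_cons]
      have h1 : ∑ i : Fin (k + 1), s i = ∑ i : Fin k, Fin.init s i + s (Fin.last k) := by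
        rw [Fin.sum_univ_castSucc]
        simp [Fin.init]
      have h2 : ∑ i : Fin (l + 1), t i = t 0 + ∑ i : Fin l, Fin.tail t i := by
        rw [Fin.sum_univ_succ]
        simp [Fin.tail]
      rw [← hs.2, ← ht.2, h1, h2]
      ring
  exact key

/-- The prismatic map `μ^{k,l}_{p,q} : Δᵏ_p × Δˡ_q → Δ^{k+l}_{p+q}`. -/
def prismMap (k l : ℕ) (p q : ℝ) (x : SSimplex k p × SSimplex l q) :
    SSimplex (k + l) (p + q) :=
  ⟨prismFun k l x.1.1 x.2.1, prismFun_mem x.1.2 x.2.2⟩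

/-- The sum of the first `m` coordinates `∑_{i=0}^{m-1} uᵢ` of a point of `ℝ^{n+1}`. -/
def partialSum {n : ℕ} (u : Fin (n + 1) → ℝ) (m : ℕ) : ℝ :=
  ∑ i ∈ Finset.univ.filter (fun i : Fin (n + 1) => (i : ℕ) < m), u i

/-!
Split a point `u` of `Δ^{k+l}_{p+q}` as `(w, c, v)` with `w = (u₀,…,u_{k-1})`, `c = u_k` and
`v = (u_{k+1},…,u_{k+l})`. Then `u = μ(s, t)` exactly when `s = (w, a)` and `t = (b, v)` with
`a + b = c`; the sum conditions force `a = p - ∑ w` and `b = ∑ w + c - p`, and these are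
nonnegative exactly when `∑_{i<k} uᵢ ≤ p ≤ ∑_{i≤k} uᵢ`.
-/

theorem Fin.exists_eq_append_cons {α : Type*} {m n : ℕ} (u : Fin (m + (n + 1)) → α) :
    ∃ w c v, u = Fin.append w (Fin.cons c v) :=
  ⟨_, _, _, by rw [Fin.cons_self_tail, Fin.append_castAdd_natAdd]⟩

theorem forall_append_cons {α : Type*} {m n : ℕ} (P : α → Prop) (w : Fin m → α) (c : α)
    (v : Fin n → α) :
    (∀ i : Fin (m + n + 1), P (Fin.append w (Fin.cons c v) i)) ↔
      (∀ i, P (w i)) ∧ P c ∧ ∀ i, P (v i) := by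
  change (∀ i : Fin (m + (n + 1)), _) ↔ _
  simp [Fin.forall_fin_add, Fin.forall_fin_succ]

theorem sum_append_cons {M : Type*} [AddCommMonoid M] {m n : ℕ} (w : Fin m → M) (c : M)
    (v : Fin n → M) :
    ∑ i : Fin (m + n + 1), Fin.append w (Fin.cons c v) i = ∑ i, w i + (c + ∑ i, v i) := by
  change ∑ i : Fin (m + (n + 1)), _ = _
  simp [Fin.sum_univ_add, Fin.sum_cons]

theorem partialSum_zero {n : ℕ} (u : Fin (n + 1) → ℝ) : partialSum u 0 = 0 := by
  simp [partialSum]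

theorem partialSum_one {n : ℕ} (u : Fin (n + 1) → ℝ) : partialSum u 1 = u 0 := by
  simp [partialSum, Finset.sum_filter]

theorem partialSum_append {m n : ℕ} (w : Fin m → ℝ) (v : Fin (n + 1) → ℝ) (j : ℕ) :
    partialSum (Fin.append w v : Fin (m + (n + 1)) → ℝ) (m + j) =
      ∑ i, w i + partialSum v j := by
  simp only [partialSum, Finset.sum_filter]
  change ∑ i : Fin (m + (n + 1)), _ = _
  have hw (i : Fin m) : (i : ℕ) < m + j := by omega
  simp [Fin.sum_univ_add, hw]

theorem partialSum_append_cons {m n : ℕ} (w : Fin m → ℝ) (c : ℝ) (v : Fin n → ℝ) :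
    partialSum (Fin.append w (Fin.cons c v) : Fin (m + (n + 1)) → ℝ) m = ∑ i, w i := by
  simpa [partialSum_zero] using partialSum_append w (Fin.cons c v) 0

theorem partialSum_append_cons_succ {m n : ℕ} (w : Fin m → ℝ) (c : ℝ) (v : Fin n → ℝ) :
    partialSum (Fin.append w (Fin.cons c v) : Fin (m + (n + 1)) → ℝ) (m + 1) =
      ∑ i, w i + c := by
  simpa [partialSum_one] using partialSum_append w (Fin.cons c v) 1

theorem prismFun_snoc_cons {k l : ℕ} (w : Fin k → ℝ) (a b : ℝ) (v : Fin l → ℝ) :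
    prismFun k l (Fin.snoc w a) (Fin.cons b v) = Fin.append w (Fin.cons (a + b) v) := by
  simp [prismFun]

theorem partialSum_prismFun {k l : ℕ} (s : Fin (k + 1) → ℝ) (t : Fin (l + 1) → ℝ) :
    partialSum (prismFun k l s t) k = ∑ i, s i - s (Fin.last k) := by
  rw [prismFun, partialSum_append_cons, Fin.sum_univ_castSucc]
  simp [Fin.init]

theorem partialSum_prismFun_succ {k l : ℕ} (s : Fin (k + 1) → ℝ) (t : Fin (l + 1) → ℝ) :
    partialSum (prismFun k l s t) (k + 1) = ∑ i, s i + t 0 := by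
  rw [prismFun, partialSum_append_cons_succ, Fin.sum_univ_castSucc]
  simp [Fin.init, add_assoc]

theorem mem_range_prismMap_of_eq_append_cons {k l : ℕ} {p q : ℝ} (x : SSimplex (k + l) (p + q))
    {w : Fin k → ℝ} {c : ℝ} {v : Fin l → ℝ} (hx : x.1 = Fin.append w (Fin.cons c v))
    (hw : ∑ i, w i ≤ p) (hc : p ≤ ∑ i, w i + c) :
    x ∈ Set.range (prismMap k l p q) := by
  obtain ⟨hx₀, hx₁⟩ := x.2
  rw [hx, forall_append_cons] at hx₀
  rw [hx, sum_append_cons] at hx₁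
  refine ⟨(⟨Fin.snoc w (p - ∑ i, w i), ?_, ?_⟩,
    ⟨Fin.cons (∑ i, w i + c - p) v, ?_, ?_⟩), ?_⟩
  · rw [Fin.forall_iff_castSucc]
    simpa using ⟨hw, hx₀.1⟩
  · simp [Fin.sum_snoc]
  · rw [Fin.forall_fin_succ]
    simpa using ⟨hc, hx₀.2.2⟩
  · rw [Fin.sum_cons]
    linarith
  · refine Subtype.ext ?_
    change prismFun k l _ _ = x.1
    rw [prismFun_snoc_cons, hx]
    congr 2
    ring

theorem range_prismMap_general (k l : ℕ) (p q : ℝ) :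
    Set.range (prismMap k l p q) =
      {u : SSimplex (k + l) (p + q) | partialSum u.1 k ≤ p ∧ p ≤ partialSum u.1 (k + 1)} := by
  ext x
  constructor
  · rintro ⟨⟨s, t⟩, rfl⟩
    change partialSum (prismFun k l s.1 t.1) k ≤ p ∧
      p ≤ partialSum (prismFun k l s.1 t.1) (k + 1)
    rw [partialSum_prismFun, partialSum_prismFun_succ, s.2.2]
    exact ⟨by linarith [s.2.1 (Fin.last k)], by linarith [t.2.1 0]⟩
  · rintro ⟨hk, hk₁⟩
    obtain ⟨w, c, v, hx⟩ := Fin.exists_eq_append_cons (m := k) (n := l) x.1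
    rw [hx, partialSum_append_cons] at hk
    rw [hx, partialSum_append_cons_succ] at hk₁
    exact mem_range_prismMap_of_eq_append_cons x hx hk hk₁

/-- For `p, q ≥ 0`, the image of the prismatic map
`μ^{k,l}_{p,q} : Δᵏ_p × Δˡ_q → Δ^{k+l}_{p+q}` is exactly
`{u ∈ Δ^{k+l}_{p+q} : ∑_{i=0}^{k−1} uᵢ ≤ p ≤ ∑_{i=0}^{k} uᵢ}`. -/
theorem range_prismMap (k l : ℕ) (p q : ℝ) (hp : 0 ≤ p) (hq : 0 ≤ q) :
    Set.range (prismMap k l p q) =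
      {u : SSimplex (k + l) (p + q) | partialSum u.1 k ≤ p ∧ p ≤ partialSum u.1 (k + 1)} :=
  range_prismMap_general k l p q
end

section
/- For real numbers p, q ≥ 0 and integers 0 ≤ k < k' ≤ n, with l = n − k and l' = n − k', the intersection of the images of the prismatic maps μ^{k,l}_{p,q} and μ^{k',l'}_{p,q} inside Δⁿ_{p+q} is exactly the set {u ∈ Δⁿ_{p+q} : ∑_{i=0}^{k} uᵢ = p and u_j = 0 for all j with k < j < k'}. -/
open Topology

/-- The scaled `n`-simplex as a subset of `ℝ^{n+1}`. -/
def scaledSimplex (n : ℕ) (p : ℝ) : Set (Fin (n + 1) → ℝ) :=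
  {t | (∀ i, 0 ≤ t i) ∧ ∑ i, t i = p}

/-- The image of the prismatic map `μ^{k,l}_{p,q}`, viewed inside `ℝ^{n+1}` where `n = k + l`. -/
def prismImage (k l : ℕ) (p q : ℝ) {n : ℕ} (hn : k + l = n) : Set (Fin (n + 1) → ℝ) :=
  {u | ∃ s ∈ scaledSimplex k p, ∃ t ∈ scaledSimplex l q,
    u = prismFun k l s t ∘ Fin.cast (show n + 1 = k + l + 1 by omega)}

lemma prismFun_eq (k l : ℕ) (s : Fin (k + 1) → ℝ) (t : Fin (l + 1) → ℝ)
    (i : Fin (k + l + 1)) :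
    prismFun k l s t i =
      if h : (i : ℕ) < k then s ⟨i, by omega⟩
      else if h2 : (i : ℕ) = k then s (Fin.last k) + t 0
      else t ⟨(i : ℕ) - k, by omega⟩ := by
  unfold prismFun
  by_cases h : (i : ℕ) < k
  · rw [dif_pos h]
    exact Fin.append_left (Fin.init s) _ ⟨(i : ℕ), h⟩
  · have key : Fin.append (Fin.init s) (Fin.cons (s (Fin.last k) + t 0) (Fin.tail t))
        (Fin.natAdd k (⟨(i : ℕ) - k, by omega⟩ : Fin (l + 1))) =
        Fin.cons (s (Fin.last k) + t 0) (Fin.tail t) ⟨(i : ℕ) - k, by omega⟩ :=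
      Fin.append_right _ _ _
    rw [dif_neg h]
    by_cases h2 : (i : ℕ) = k
    · rw [dif_pos h2]
      rw [show (⟨(i : ℕ) - k, by omega⟩ : Fin (l + 1)) = 0 from by ext; simp; omega,
        Fin.cons_zero] at key
      refine Eq.trans ?_ key
      congr 1
      ext; simp; omega
    · rw [dif_neg h2]
      rw [show (⟨(i : ℕ) - k, by omega⟩ : Fin (l + 1)) =
        Fin.succ ⟨(i : ℕ) - k - 1, by omega⟩ from by ext; simp; omega, Fin.cons_succ] at key
      refine Eq.trans ?_ (key.trans ?_)
      · congr 1
        ext; simp; omega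
      · show t _ = t _
        congr 1
        ext; simp [Fin.tail]; omega

lemma partialSum_eq {n : ℕ} (u : Fin (n + 1) → ℝ) {m : ℕ} (hm : m ≤ n + 1) :
    partialSum u m = ∑ i : Fin m, u (Fin.castLE hm i) := by
  rw [partialSum,
    show (Finset.univ.filter fun i : Fin (n + 1) => (i : ℕ) < m) =
      Finset.univ.map (Fin.castLEEmb hm) from ?_, Finset.sum_map]
  · rfl
  · ext i
    simp only [Finset.mem_filter, Finset.mem_univ, true_and, Finset.mem_map,
      Fin.castLEEmb_apply]
    constructor
    · rintro h
      exact ⟨⟨(i : ℕ), h⟩, by ext; rfl⟩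
    · rintro ⟨j, -, rfl⟩
      exact j.isLt

lemma partialSum_succ {n : ℕ} (u : Fin (n + 1) → ℝ) {m : ℕ} (hm : m < n + 1) :
    partialSum u (m + 1) = partialSum u m + u ⟨m, hm⟩ := by
  rw [partialSum_eq u (show m + 1 ≤ n + 1 by omega), partialSum_eq u (le_of_lt hm),
    Fin.sum_univ_castSucc]
  rfl

lemma partialSum_mono {n : ℕ} {u : Fin (n + 1) → ℝ} (hu : ∀ i, 0 ≤ u i)
    {a b : ℕ} (h : a ≤ b) : partialSum u a ≤ partialSum u b := by
  apply Finset.sum_le_sum_of_subset_of_nonneg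
  · intro i
    simp only [Finset.mem_filter, Finset.mem_univ, true_and]
    omega
  · intro i _ _
    exact hu i

lemma partialSum_top {n : ℕ} (u : Fin (n + 1) → ℝ) :
    partialSum u (n + 1) = ∑ i, u i := by
  rw [partialSum_eq u (le_refl (n + 1))]
  congr

lemma mem_prismImage_iff {k l n : ℕ} (hn : k + l = n) {p q : ℝ} (hp : 0 ≤ p)
    (hq : 0 ≤ q) (u : Fin (n + 1) → ℝ) :
    u ∈ prismImage k l p q hn ↔
      u ∈ scaledSimplex n (p + q) ∧ partialSum u k ≤ p ∧ p ≤ partialSum u (k + 1) := by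
  have hkn : k < n + 1 := by omega
  constructor
  · rintro ⟨s, hs, t, ht, rfl⟩
    set v := prismFun k l s t ∘ Fin.cast (show n + 1 = k + l + 1 by omega) with hv
    have hmem := prismFun_mem (p := p) (q := q) (s := s) (t := t) hs ht
    have hvi : ∀ i, v i = prismFun k l s t (Fin.cast (by omega) i) := fun i => rfl
    have hpos : ∀ i, 0 ≤ v i := fun i => hmem.1 _
    have hsum : ∑ i, v i = p + q := by
      rw [hv]
      rw [show (prismFun k l s t ∘ Fin.cast (show n + 1 = k + l + 1 by omega)) =
        fun i => prismFun k l s t ((finCongr (show n + 1 = k + l + 1 by omega)) i) from rfl]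
      rw [Equiv.sum_comp (finCongr (show n + 1 = k + l + 1 by omega)) (prismFun k l s t)]
      exact hmem.2
    have hsk : ∑ i : Fin k, s (Fin.castSucc i) + s (Fin.last k) = p := by
      rw [← Fin.sum_univ_castSucc]; exact hs.2
    have hPSk : partialSum v k = p - s (Fin.last k) := by
      rw [partialSum_eq v (le_of_lt hkn)]
      have : ∀ i : Fin k, v (Fin.castLE (le_of_lt hkn) i) = s (Fin.castSucc i) := by
        intro i
        rw [hvi, prismFun_eq]
        rw [dif_pos (show ((Fin.cast (show n + 1 = k + l + 1 by omega)
          (Fin.castLE (le_of_lt hkn) i) : Fin (k + l + 1)) : ℕ) < k from i.isLt)]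
        congr 1
      rw [Finset.sum_congr rfl (fun i _ => this i)]
      linarith [hsk]
    have hvk : v ⟨k, hkn⟩ = s (Fin.last k) + t 0 := by
      rw [hvi, prismFun_eq]
      rw [dif_neg (by simp), dif_pos (by simp)]
    constructor
    · exact ⟨hpos, hsum⟩
    constructor
    · rw [hPSk]; linarith [hs.1 (Fin.last k)]
    · rw [partialSum_succ v hkn, hPSk, hvk]
      linarith [ht.1 0]
  · rintro ⟨⟨hpos, hsum⟩, hA, hB⟩
    set S : Fin (k + 1) → ℝ :=
      fun i => if (i : ℕ) < k then u (Fin.castLE (show k + 1 ≤ n + 1 by omega) i)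
        else p - partialSum u k with hS
    set T : Fin (l + 1) → ℝ :=
      fun j => if (j : ℕ) = 0 then partialSum u (k + 1) - p
        else u ⟨k + j, by have := j.isLt; omega⟩ with hT
    have hPSk : partialSum u k = ∑ i : Fin k, u (Fin.castLE (show k ≤ n + 1 by omega) i) :=
      partialSum_eq u _
    have hPS1 : partialSum u (k + 1) = partialSum u k + u ⟨k, hkn⟩ := partialSum_succ u hkn
    have eS1 : ∀ i : Fin k, S (Fin.castSucc i) =
        u (Fin.castLE (show k ≤ n + 1 by omega) i) := by
      intro i
      rw [hS]
      dsimp only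
      rw [if_pos (by simpa using i.isLt)]
      congr 1
    have eS2 : S (Fin.last k) = p - partialSum u k := by
      rw [hS]
      dsimp only
      rw [if_neg (by simp)]
    have eT0 : T 0 = partialSum u (k + 1) - p := by
      rw [hT]
      simp
    have eT1 : ∀ j : Fin l, T (Fin.succ j) = u ⟨k + 1 + j, by have := j.isLt; omega⟩ := by
      intro j
      rw [hT]
      dsimp only
      rw [if_neg (by simp)]
      congr 1
      ext
      simp
      omega
    have htail : ∑ j : Fin l, u ⟨k + 1 + j, by have := j.isLt; omega⟩ =
        (p + q) - partialSum u (k + 1) := by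
      have hc : ∑ i : Fin (n + 1), u i =
          ∑ i : Fin (k + 1 + l), u (Fin.cast (by omega) i) := by
        rw [← Equiv.sum_comp (finCongr (show k + 1 + l = n + 1 by omega)) u]
        rfl
      have hsplit : ∑ i : Fin (k + 1 + l), u (Fin.cast (by omega : k + 1 + l = n + 1) i) =
          ∑ i : Fin (k + 1), u (Fin.cast (by omega : k + 1 + l = n + 1) (Fin.castAdd l i)) +
          ∑ i : Fin l, u (Fin.cast (by omega : k + 1 + l = n + 1) (Fin.natAdd (k + 1) i)) :=
        Fin.sum_univ_add _
      have hleft : ∑ i : Fin (k + 1),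
          u (Fin.cast (by omega : k + 1 + l = n + 1) (Fin.castAdd l i)) =
          partialSum u (k + 1) := by
        rw [partialSum_eq u (show k + 1 ≤ n + 1 by omega)]
        apply Finset.sum_congr rfl
        intro i _
        congr 1
      have hright : ∑ i : Fin l,
          u (Fin.cast (by omega : k + 1 + l = n + 1) (Fin.natAdd (k + 1) i)) =
          ∑ j : Fin l, u ⟨k + 1 + j, by have := j.isLt; omega⟩ := by
        apply Finset.sum_congr rfl
        intro i _
        congr 1
      rw [hsum] at hc
      linarith [hsplit, hleft, hright]
    refine ⟨S, ⟨?_, ?_⟩, T, ⟨?_, ?_⟩, ?_⟩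
    · intro i
      rw [hS]
      dsimp only
      by_cases h : (i : ℕ) < k
      · rw [if_pos h]; exact hpos _
      · rw [if_neg h]; linarith
    · rw [Fin.sum_univ_castSucc, Finset.sum_congr rfl (fun i _ => eS1 i), eS2, ← hPSk]
      ring
    · intro j
      rw [hT]
      dsimp only
      by_cases h : (j : ℕ) = 0
      · rw [if_pos h]; linarith
      · rw [if_neg h]; exact hpos _
    · rw [Fin.sum_univ_succ, eT0, Finset.sum_congr rfl (fun j _ => eT1 j), htail]
      ring
    · funext i
      show u i = prismFun k l S T (Fin.cast (by omega) i)
      rw [prismFun_eq]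
      by_cases h : (i : ℕ) < k
      · rw [dif_pos (show ((Fin.cast (show n + 1 = k + l + 1 by omega) i :
            Fin (k + l + 1)) : ℕ) < k from h)]
        rw [hS]
        dsimp only
        rw [if_pos (show ((⟨((Fin.cast (show n + 1 = k + l + 1 by omega) i :
            Fin (k + l + 1)) : ℕ), by rw [Fin.coe_cast]; omega⟩ : Fin (k + 1)) : ℕ) < k from h)]
        congr 1
      · by_cases h2 : (i : ℕ) = k
        · rw [dif_neg (show ¬ ((Fin.cast (show n + 1 = k + l + 1 by omega) i :
              Fin (k + l + 1)) : ℕ) < k from h),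
            dif_pos (show ((Fin.cast (show n + 1 = k + l + 1 by omega) i :
              Fin (k + l + 1)) : ℕ) = k from h2)]
          rw [eS2, eT0]
          have hik : i = ⟨k, hkn⟩ := by ext; exact h2
          rw [hik, hPS1]
          ring
        · rw [dif_neg (show ¬ ((Fin.cast (show n + 1 = k + l + 1 by omega) i :
              Fin (k + l + 1)) : ℕ) < k from h),
            dif_neg (show ¬ ((Fin.cast (show n + 1 = k + l + 1 by omega) i :
              Fin (k + l + 1)) : ℕ) = k from h2)]
          rw [hT]
          dsimp only
          rw [if_neg (by simp; omega)]
          congr 1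
          ext
          simp
          omega

/-- For `p, q ≥ 0` and `0 ≤ k < k' ≤ n`, with `l = n − k` and `l' = n − k'`,
the intersection of the images of `μ^{k,l}_{p,q}` and `μ^{k',l'}_{p,q}` inside `Δⁿ_{p+q}` is
exactly `{u ∈ Δⁿ_{p+q} : ∑_{i=0}^{k} uᵢ = p and u_j = 0 for all k < j < k'}`. -/
theorem prismImage_inter (p q : ℝ) (hp : 0 ≤ p) (hq : 0 ≤ q) (n k k' l l' : ℕ)
    (hkk' : k < k') (hk'n : k' ≤ n) (hl : l = n - k) (hl' : l' = n - k') :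
    prismImage k l p q (by omega) ∩ prismImage k' l' p q (by omega) =
      {u | u ∈ scaledSimplex n (p + q) ∧ partialSum u (k + 1) = p ∧
        ∀ j : Fin (n + 1), k < (j : ℕ) → (j : ℕ) < k' → u j = 0} := by
  ext u
  rw [Set.mem_inter_iff, mem_prismImage_iff _ hp hq, mem_prismImage_iff _ hp hq]
  constructor
  · rintro ⟨⟨hsimp, hk1, hk2⟩, -, hk'1, hk'2⟩
    have hmono := fun a b (h : a ≤ b) => partialSum_mono (u := u) hsimp.1 h
    have hc1 : partialSum u (k + 1) ≤ partialSum u k' := hmono _ _ (by omega)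
    have hPS : partialSum u (k + 1) = p := by linarith
    refine ⟨hsimp, hPS, ?_⟩
    intro j hjk hjk'
    have hjn : (j : ℕ) < n + 1 := j.isLt
    have hsucc := partialSum_succ u hjn
    have hle1 : partialSum u (k + 1) ≤ partialSum u (j : ℕ) := hmono _ _ (by omega)
    have hle2 : partialSum u ((j : ℕ) + 1) ≤ partialSum u k' := hmono _ _ (by omega)
    have hju : u ⟨(j : ℕ), hjn⟩ = u j := by congr 1
    have := hsimp.1 j
    rw [← hju]
    linarith [hsimp.1 (⟨(j : ℕ), hjn⟩ : Fin (n + 1))]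
  · rintro ⟨hsimp, hPS, hzero⟩
    have hmono := fun a b (h : a ≤ b) => partialSum_mono (u := u) hsimp.1 h
    have hPSk' : partialSum u k' = p := by
      have key : ∀ m, k + 1 ≤ m → m ≤ k' → partialSum u m = p := by
        intro m hm1
        induction m, hm1 using Nat.le_induction with
        | base => intro _; exact hPS
        | succ m hm ih =>
          intro hmk'
          have hmn : m < n + 1 := by omega
          rw [partialSum_succ u hmn, ih (by omega),
            hzero ⟨m, hmn⟩ (by simpa using by omega) (by simpa using by omega)]
          ring
      exact key k' (by omega) le_rfl
    have c1 : partialSum u k ≤ p := by linarith [hmono k (k + 1) (by omega)]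
    have c3 : p ≤ partialSum u (k' + 1) := by linarith [hmono k' (k' + 1) (by omega)]
    exact ⟨⟨hsimp, c1, le_of_eq hPS.symm⟩, ⟨hsimp, le_of_eq hPSk', c3⟩⟩
end

section
/- The prismatic subdivision is a coequalizer: fix real numbers p > 0 and q > 0 and an integer n ≥ 0. First, for all k + l = n − 1 and all (s, t) ∈ Δᵏ_p × Δˡ_q one has μ^{k+1,l}_{p,q}((s₀,…,s_k,0), t) = μ^{k,l+1}_{p,q}(s, (0,t₀,…,t_l)). Second, given any topological space Z and continuous maps g_{k,l} : Δᵏ_p × Δˡ_q → Z for each k + l = n satisfying the compatibility g_{k+1,l}((s₀,…,s_k,0), t) = g_{k,l+1}(s, (0,t₀,…,t_l)) for all k + l = n − 1, there exists a unique continuous map g : Δⁿ_{p+q} → Z with g ∘ μ^{k,l}_{p,q} = g_{k,l} for all k + l = n. -/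
open Topology

/-- Transport a point of `Δᵐ_p` along an equality `m = n` of dimensions. -/
def castSimplex {m n : ℕ} (h : m = n) {p : ℝ} (x : SSimplex m p) : SSimplex n p :=
  ⟨x.1 ∘ Fin.cast (congrArg (· + 1) h.symm), by
    refine ⟨fun i => x.2.1 _, ?_⟩
    exact (Fintype.sum_equiv (finCongr (congrArg (· + 1) h.symm))
      (x.1 ∘ Fin.cast (congrArg (· + 1) h.symm)) x.1 (fun i => rfl)).trans x.2.2⟩

/-- `(s₀,…,s_k) ↦ (s₀,…,s_k,0) : Δᵏ_p → Δ^{k+1}_p`. -/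
def snocZero {k : ℕ} {p : ℝ} (x : SSimplex k p) : SSimplex (k + 1) p :=
  ⟨Fin.snoc x.1 0, by
    constructor
    · intro i
      refine Fin.lastCases ?_ (fun j => ?_) i
      · simp
      · simp only [Fin.snoc_castSucc]
        exact x.2.1 _
    · rw [Fin.sum_univ_castSucc]
      simpa using x.2.2⟩

/-- `(t₀,…,t_l) ↦ (0,t₀,…,t_l) : Δˡ_q → Δ^{l+1}_q`. -/
def consZero {l : ℕ} {q : ℝ} (x : SSimplex l q) : SSimplex (l + 1) q :=
  ⟨Fin.cons 0 x.1, by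
    constructor
    · intro i
      refine Fin.cases ?_ (fun j => ?_) i
      · simp
      · simp only [Fin.cons_succ]
        exact x.2.1 _
    · rw [Fin.sum_univ_succ]
      simpa using x.2.2⟩


-- pointwise characterisation
lemma prismFun_apply_lt {k l : ℕ} (s : Fin (k+1) → ℝ) (t : Fin (l+1) → ℝ)
    (i : Fin (k + l + 1)) (h : (i : ℕ) < k) :
    prismFun k l s t i = s ⟨i, by omega⟩ := by
  unfold prismFun
  have : (i : Fin (k + (l+1))) = Fin.castAdd (l+1) ⟨i, h⟩ := by ext; rfl
  refine (congrArg _ this).trans ?_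
  rw [Fin.append_left]
  rfl

lemma prismFun_apply_eq {k l : ℕ} (s : Fin (k+1) → ℝ) (t : Fin (l+1) → ℝ)
    (i : Fin (k + l + 1)) (h : (i : ℕ) = k) :
    prismFun k l s t i = s (Fin.last k) + t 0 := by
  unfold prismFun
  have : (i : Fin (k + (l+1))) = Fin.natAdd k (0 : Fin (l+1)) := by ext; simp [h]
  rw [this, Fin.append_right]
  simp

lemma prismFun_apply_gt {k l : ℕ} (s : Fin (k+1) → ℝ) (t : Fin (l+1) → ℝ)
    (i : Fin (k + l + 1)) (h : k < (i : ℕ)) :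
    prismFun k l s t i = t ⟨i - k, by omega⟩ := by
  unfold prismFun
  have hik : (i : ℕ) - k < l + 1 := by omega
  have : (i : Fin (k + (l+1))) = Fin.natAdd k ⟨(i : ℕ) - k, hik⟩ := by ext; simp; omega
  refine (congrArg _ this).trans ?_
  rw [Fin.append_right]
  have h2 : (⟨(i:ℕ) - k, hik⟩ : Fin (l+1)) = Fin.succ ⟨(i:ℕ) - k - 1, by omega⟩ := by
    ext; simp; omega
  rw [h2, Fin.cons_succ]
  unfold Fin.tail
  congr 1

noncomputable section

def uext {n : ℕ} {r : ℝ} (u : SSimplex n r) (i : ℕ) : ℝ :=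
  if h : i < n + 1 then u.1 ⟨i, h⟩ else 0

def psum {n : ℕ} {r : ℝ} (u : SSimplex n r) (j : ℕ) : ℝ :=
  ∑ i ∈ Finset.range j, uext u i

lemma uext_nonneg {n : ℕ} {r : ℝ} (u : SSimplex n r) (i : ℕ) : 0 ≤ uext u i := by
  unfold uext; split
  · exact u.2.1 _
  · exact le_refl 0

lemma uext_lt {n : ℕ} {r : ℝ} (u : SSimplex n r) (i : ℕ) (h : i < n + 1) :
    uext u i = u.1 ⟨i, h⟩ := by
  unfold uext; rw [dif_pos h]

lemma psum_zero {n : ℕ} {r : ℝ} (u : SSimplex n r) : psum u 0 = 0 := by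
  simp [psum]

lemma psum_succ {n : ℕ} {r : ℝ} (u : SSimplex n r) (j : ℕ) :
    psum u (j + 1) = psum u j + uext u j := Finset.sum_range_succ _ _

lemma psum_mono {n : ℕ} {r : ℝ} (u : SSimplex n r) {j j' : ℕ} (h : j ≤ j') :
    psum u j ≤ psum u j' :=
  Finset.sum_le_sum_of_subset_of_nonneg (Finset.range_subset_range.2 h)
    (fun i _ _ => uext_nonneg u i)

lemma psum_total {n : ℕ} {r : ℝ} (u : SSimplex n r) : psum u (n + 1) = r := by
  unfold psum
  rw [← Fin.sum_univ_eq_sum_range (fun i => uext u i) (n+1)]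
  refine Eq.trans ?_ u.2.2
  refine Finset.sum_congr rfl fun i _ => ?_
  rw [uext_lt u i i.isLt]

lemma psum_ge {n : ℕ} {r : ℝ} (u : SSimplex n r) (j : ℕ) (h : n + 1 ≤ j) :
    psum u j = r := by
  have : psum u j = psum u (n+1) := by
    unfold psum
    rw [← Finset.sum_range_add_sum_Ico _ h]
    have : ∑ i ∈ Finset.Ico (n+1) j, uext u i = 0 := by
      refine Finset.sum_eq_zero fun i hi => ?_
      have := (Finset.mem_Ico.1 hi).1
      unfold uext
      rw [dif_neg (by omega)]
    rw [this, add_zero]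
  rw [this, psum_total]

lemma continuous_psum {n : ℕ} {r : ℝ} (j : ℕ) :
    Continuous fun u : SSimplex n r => psum u j := by
  unfold psum
  refine continuous_finset_sum _ fun i _ => ?_
  unfold uext
  split
  · exact (continuous_apply _).comp continuous_subtype_val
  · exact continuous_const

end

noncomputable section

def sFun (k : ℕ) (p : ℝ) {n : ℕ} {r : ℝ} (u : SSimplex n r) : Fin (k + 1) → ℝ :=
  fun i => if (i : ℕ) = k then p - min (psum u k) p
    else min (psum u ((i : ℕ) + 1)) p - min (psum u (i : ℕ)) p

def tFun (k l : ℕ) (p : ℝ) {n : ℕ} {r : ℝ} (u : SSimplex n r) : Fin (l + 1) → ℝ :=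
  fun j => if (j : ℕ) = 0 then max (psum u (k + 1)) p - p
    else max (psum u (k + (j : ℕ) + 1)) p - max (psum u (k + (j : ℕ))) p

lemma sFun_mem (k : ℕ) {p : ℝ} (hp : 0 ≤ p) {n : ℕ} {r : ℝ} (u : SSimplex n r) :
    (∀ i, 0 ≤ sFun k p u i) ∧ ∑ i, sFun k p u i = p := by
  constructor
  · intro i
    unfold sFun
    split
    · exact sub_nonneg.2 (min_le_right _ _)
    · exact sub_nonneg.2 (min_le_min (psum_mono u (Nat.le_succ _)) le_rfl)
  · rw [Fin.sum_univ_castSucc]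
    have hlast : sFun k p u (Fin.last k) = p - min (psum u k) p := by
      unfold sFun; rw [if_pos (by simp)]
    have hcs : ∀ j : Fin k, sFun k p u (Fin.castSucc j) =
        min (psum u ((j : ℕ) + 1)) p - min (psum u (j : ℕ)) p := by
      intro j
      unfold sFun
      rw [if_neg (by simpa using j.isLt.ne)]
      rfl
    rw [hlast, Finset.sum_congr rfl (fun j _ => hcs j),
      Fin.sum_univ_eq_sum_range (fun m => min (psum u (m + 1)) p - min (psum u m) p) k,
      Finset.sum_range_sub (fun m => min (psum u m) p)]
    rw [psum_zero, min_eq_left hp]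
    ring

lemma tFun_mem (k l : ℕ) {p q : ℝ} (hq : 0 ≤ q) {n : ℕ} (h : k + l = n)
    (u : SSimplex n (p + q)) :
    (∀ j, 0 ≤ tFun k l p u j) ∧ ∑ j, tFun k l p u j = q := by
  constructor
  · intro j
    unfold tFun
    split
    · exact sub_nonneg.2 (le_max_right _ _)
    · exact sub_nonneg.2 (max_le_max (psum_mono u (Nat.le_succ _)) le_rfl)
  · rw [Fin.sum_univ_succ]
    have h0 : tFun k l p u 0 = max (psum u (k + 1)) p - p := by
      unfold tFun; rw [if_pos (by simp)]
    have hs : ∀ j : Fin l, tFun k l p u (Fin.succ j) =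
        max (psum u ((k + 1) + (j : ℕ) + 1)) p - max (psum u ((k + 1) + (j : ℕ))) p := by
      intro j
      unfold tFun
      rw [if_neg (by simp)]
      have e1 : k + ((j : ℕ) + 1) + 1 = (k + 1) + (j : ℕ) + 1 := by omega
      have e2 : k + ((j : ℕ) + 1) = (k + 1) + (j : ℕ) := by omega
      rw [show ((Fin.succ j : Fin (l+1)) : ℕ) = (j : ℕ) + 1 from rfl, e1, e2]
    rw [h0, Finset.sum_congr rfl (fun j _ => hs j),
      Fin.sum_univ_eq_sum_range
        (fun m => max (psum u ((k + 1) + m + 1)) p - max (psum u ((k + 1) + m)) p) l]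
    have : ∀ m ∈ Finset.range l, max (psum u ((k + 1) + m + 1)) p - max (psum u ((k + 1) + m)) p
        = (fun m => max (psum u ((k + 1) + m)) p) (m + 1) - (fun m => max (psum u ((k+1) + m)) p) m := by
      intro m _
      have e : (k + 1) + m + 1 = (k + 1) + (m + 1) := by omega
      rw [e]
    rw [Finset.sum_congr rfl this, Finset.sum_range_sub (fun m => max (psum u ((k+1) + m)) p)]
    have hl : (k + 1) + l = n + 1 := by omega
    rw [hl, psum_total, max_eq_left (show p ≤ p + q by linarith)]
    simp only [Nat.add_zero]
    ring

def sPart (k : ℕ) {p : ℝ} (hp : 0 ≤ p) {n : ℕ} {r : ℝ} (u : SSimplex n r) : SSimplex k p :=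
  ⟨sFun k p u, sFun_mem k hp u⟩

def tPart (k l : ℕ) {p q : ℝ} (hq : 0 ≤ q) {n : ℕ} (h : k + l = n)
    (u : SSimplex n (p + q)) : SSimplex l q :=
  ⟨tFun k l p u, tFun_mem k l hq h u⟩

lemma continuous_sPart (k : ℕ) {p : ℝ} (hp : 0 ≤ p) {n : ℕ} {r : ℝ} :
    Continuous fun u : SSimplex n r => sPart k hp u := by
  refine Continuous.subtype_mk (continuous_pi fun i => ?_) _
  unfold sFun
  split
  · exact continuous_const.sub ((continuous_psum _).min continuous_const)
  · exact ((continuous_psum _).min continuous_const).sub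
      ((continuous_psum _).min continuous_const)

lemma continuous_tPart (k l : ℕ) {p q : ℝ} (hq : 0 ≤ q) {n : ℕ} (h : k + l = n) :
    Continuous fun u : SSimplex n (p + q) => tPart k l hq h u := by
  refine Continuous.subtype_mk (continuous_pi fun j => ?_) _
  unfold tFun
  split
  · exact ((continuous_psum _).max continuous_const).sub continuous_const
  · exact ((continuous_psum _).max continuous_const).sub
      ((continuous_psum _).max continuous_const)

end

noncomputable section

lemma castSimplex_apply {m n : ℕ} (h : m = n) {p : ℝ} (x : SSimplex m p) (i : Fin (n + 1)) :
    (castSimplex h x).1 i = x.1 (Fin.cast (congrArg (· + 1) h.symm) i) := rfl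

lemma uext_diff {n : ℕ} {r : ℝ} (u : SSimplex n r) (i : Fin (n + 1)) :
    psum u ((i : ℕ) + 1) - psum u (i : ℕ) = u.1 i := by
  rw [psum_succ, uext_lt u i i.isLt]
  simp

lemma prism_reconstruct {k l n : ℕ} (h : k + l = n) {p q : ℝ} (hp : 0 ≤ p) (hq : 0 ≤ q)
    (u : SSimplex n (p + q)) (h1 : psum u k ≤ p) (h2 : p ≤ psum u (k + 1)) :
    castSimplex h (prismMap k l p q (sPart k hp u, tPart k l hq h u)) = u := by
  apply Subtype.ext
  funext i
  rw [castSimplex_apply]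
  set i' : Fin (k + l + 1) := Fin.cast (congrArg (· + 1) h.symm) i with hi'
  have hval : (i' : ℕ) = (i : ℕ) := rfl
  show prismFun k l (sFun k p u) (tFun k l p u) i' = u.1 i
  rcases lt_trichotomy ((i' : ℕ)) k with hlt | heq | hgt
  · rw [prismFun_apply_lt _ _ _ hlt]
    show sFun k p u ⟨(i' : ℕ), _⟩ = u.1 i
    unfold sFun
    rw [if_neg (by simpa using hlt.ne)]
    simp only []
    have e1 : psum u ((i' : ℕ) + 1) ≤ p := le_trans (psum_mono u (by omega)) h1
    have e2 : psum u (i' : ℕ) ≤ p := le_trans (psum_mono u (by omega)) h1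
    rw [min_eq_left e1, min_eq_left e2, hval, uext_diff]
  · rw [prismFun_apply_eq _ _ _ heq]
    show sFun k p u (Fin.last k) + tFun k l p u 0 = u.1 i
    unfold sFun tFun
    rw [if_pos (by simp), if_pos (by simp)]
    rw [min_eq_left h1, max_eq_left h2]
    have : psum u (k + 1) - psum u k = u.1 i := by
      rw [← hval, ← heq] at *
      exact uext_diff u i
    linarith [this]
  · rw [prismFun_apply_gt _ _ _ hgt]
    show tFun k l p u ⟨(i' : ℕ) - k, _⟩ = u.1 i
    unfold tFun
    rw [if_neg (by simp; omega)]
    simp only []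
    have e0 : k + ((i' : ℕ) - k) = (i' : ℕ) := by omega
    rw [e0]
    have e1 : p ≤ psum u (i' : ℕ) := le_trans h2 (psum_mono u (by omega))
    have e2 : p ≤ psum u ((i' : ℕ) + 1) := le_trans e1 (psum_mono u (by omega))
    rw [max_eq_left e1, max_eq_left e2, hval, uext_diff]

end

noncomputable section

variable {k l n : ℕ} {p q : ℝ}

lemma uext_prism_lt (h : k + l = n) (s : SSimplex k p) (t : SSimplex l q)
    (m : ℕ) (hm : m < k) :
    uext (castSimplex h (prismMap k l p q (s, t))) m = s.1 ⟨m, by omega⟩ := by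
  have hm' : m < n + 1 := by omega
  rw [uext_lt _ m hm', castSimplex_apply]
  exact prismFun_apply_lt _ _ _ hm

lemma uext_prism_eq (h : k + l = n) (s : SSimplex k p) (t : SSimplex l q) :
    uext (castSimplex h (prismMap k l p q (s, t))) k = s.1 (Fin.last k) + t.1 0 := by
  have hm' : k < n + 1 := by omega
  rw [uext_lt _ k hm', castSimplex_apply]
  exact prismFun_apply_eq _ _ _ rfl

lemma uext_prism_gt (h : k + l = n) (s : SSimplex k p) (t : SSimplex l q)
    (m : ℕ) (hm1 : k < m) (hm2 : m < n + 1) :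
    uext (castSimplex h (prismMap k l p q (s, t))) m = t.1 ⟨m - k, by omega⟩ := by
  rw [uext_lt _ m hm2, castSimplex_apply]
  exact prismFun_apply_gt _ _ _ hm1

lemma psum_prism_k (h : k + l = n) (s : SSimplex k p) (t : SSimplex l q) :
    psum (castSimplex h (prismMap k l p q (s, t))) k = p - s.1 (Fin.last k) := by
  unfold psum
  rw [← Fin.sum_univ_eq_sum_range (fun m => uext (castSimplex h (prismMap k l p q (s, t))) m) k]
  have e : ∀ i : Fin k, uext (castSimplex h (prismMap k l p q (s, t))) (i : ℕ)
      = s.1 (Fin.castSucc i) := by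
    intro i
    rw [uext_prism_lt h s t i i.isLt]
    congr 1
  rw [Finset.sum_congr rfl (fun i _ => e i)]
  have := s.2.2
  rw [Fin.sum_univ_castSucc] at this
  linarith

lemma psum_prism_k1 (h : k + l = n) (s : SSimplex k p) (t : SSimplex l q) :
    psum (castSimplex h (prismMap k l p q (s, t))) (k + 1) = p + t.1 0 := by
  rw [psum_succ, psum_prism_k h s t, uext_prism_eq h s t]
  ring

lemma prism_inj (h : k + l = n) {s s' : SSimplex k p} {t t' : SSimplex l q}
    (H : castSimplex h (prismMap k l p q (s, t)) = castSimplex h (prismMap k l p q (s', t'))) :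
    s = s' ∧ t = t' := by
  have Hu : ∀ m : ℕ, uext (castSimplex h (prismMap k l p q (s, t))) m
      = uext (castSimplex h (prismMap k l p q (s', t'))) m := by
    intro m; rw [H]
  have hs : ∀ i : Fin (k + 1), (i : ℕ) < k → s.1 i = s'.1 i := by
    intro i hik
    have := Hu (i : ℕ)
    rw [uext_prism_lt h s t _ hik, uext_prism_lt h s' t' _ hik] at this
    simpa using this
  have hslast : s.1 (Fin.last k) = s'.1 (Fin.last k) := by
    have h1 := s.2.2
    have h2 := s'.2.2
    rw [Fin.sum_univ_castSucc] at h1 h2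
    have : ∑ i : Fin k, s.1 (Fin.castSucc i) = ∑ i : Fin k, s'.1 (Fin.castSucc i) :=
      Finset.sum_congr rfl fun i _ => hs _ (by simp)
    linarith
  have hseq : s = s' := by
    apply Subtype.ext; funext i
    rcases lt_or_eq_of_le (Nat.lt_succ_iff.1 i.isLt) with hik | hik
    · exact hs i hik
    · have : i = Fin.last k := by ext; exact hik
      rw [this]; exact hslast
  refine ⟨hseq, ?_⟩
  have ht0 : t.1 0 = t'.1 0 := by
    have := Hu k
    rw [uext_prism_eq h s t, uext_prism_eq h s' t', hslast] at this
    linarith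
  apply Subtype.ext; funext j
  rcases Nat.eq_zero_or_pos (j : ℕ) with hj | hj
  · have : j = 0 := by ext; exact hj
    rw [this]; exact ht0
  · have hm2 : k + (j : ℕ) < n + 1 := by omega
    have := Hu (k + (j : ℕ))
    rw [uext_prism_gt h s t _ (by omega) hm2, uext_prism_gt h s' t' _ (by omega) hm2] at this
    have ej : (⟨k + (j : ℕ) - k, by omega⟩ : Fin (l + 1)) = j := by ext; simp
    rwa [ej] at this

end

noncomputable section

variable {k l n : ℕ} {p q : ℝ}

lemma snoc_mk_lt (f : Fin (k + 1) → ℝ) (a : ℝ) (m : ℕ) (hm : m < k + 1) (hm2 : m < k + 2) :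
    (Fin.snoc f a : Fin (k + 2) → ℝ) ⟨m, hm2⟩ = f ⟨m, hm⟩ := by
  have : (⟨m, hm2⟩ : Fin (k + 2)) = Fin.castSucc ⟨m, hm⟩ := by ext; rfl
  rw [this, Fin.snoc_castSucc]

lemma cons_mk_pos (f : Fin (l + 1) → ℝ) (a : ℝ) (m : ℕ) (hm : 0 < m) (hm2 : m < l + 2) :
    (Fin.cons a f : Fin (l + 2) → ℝ) ⟨m, hm2⟩ = f ⟨m - 1, by omega⟩ := by
  have : (⟨m, hm2⟩ : Fin (l + 2)) = Fin.succ ⟨m - 1, by omega⟩ := by ext; simp; omega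
  rw [this, Fin.cons_succ]

lemma prism_boundary (s : SSimplex k p) (t : SSimplex l q) :
    castSimplex (Nat.add_right_comm k 1 l) (prismMap (k + 1) l p q (snocZero s, t)) =
      castSimplex rfl (prismMap k (l + 1) p q (s, consZero t)) := by
  apply Subtype.ext
  funext i
  rw [castSimplex_apply, castSimplex_apply]
  set i₁ : Fin (k + 1 + l + 1) := Fin.cast (congrArg (· + 1) (Nat.add_right_comm k 1 l).symm) i with hdef1
  set i₂ : Fin (k + (l + 1) + 1) := Fin.cast (congrArg (· + 1) (rfl : k + (l+1) = k + l + 1).symm) i with hdef2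
  have hv1 : (i₁ : ℕ) = (i : ℕ) := rfl
  have hv2 : (i₂ : ℕ) = (i : ℕ) := rfl
  show prismFun (k + 1) l (Fin.snoc s.1 0) t.1 i₁ = prismFun k (l + 1) s.1 (Fin.cons 0 t.1) i₂
  rcases lt_trichotomy ((i : ℕ)) k with hlt | heq | hgt
  · rw [prismFun_apply_lt _ _ i₁ (by omega), prismFun_apply_lt _ _ i₂ (by omega),
      snoc_mk_lt s.1 0 _ (by omega)]
    exact congrArg s.1 (Fin.ext rfl)
  · rw [prismFun_apply_lt _ _ i₁ (by omega), prismFun_apply_eq _ _ i₂ (by omega),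
      snoc_mk_lt s.1 0 _ (by omega), Fin.cons_zero, add_zero]
    exact congrArg s.1 (Fin.ext heq)
  · rcases Nat.eq_or_lt_of_le (Nat.succ_le_of_lt hgt) with heq1 | hgt1
    · rw [prismFun_apply_eq _ _ i₁ (by omega), prismFun_apply_gt _ _ i₂ (by omega),
        Fin.snoc_last, zero_add, cons_mk_pos t.1 0 _ (by omega)]
      exact congrArg t.1 (Fin.ext (by simp only [Fin.val_zero]; omega))
    · rw [prismFun_apply_gt _ _ i₁ (by omega), prismFun_apply_gt _ _ i₂ (by omega),
        cons_mk_pos t.1 0 _ (by omega)]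
      exact congrArg t.1 (Fin.ext (by simp only []; omega))

lemma sPart_succ_eq {r : ℝ} (hp : 0 ≤ p) (u : SSimplex n r) (hmid : psum u (k + 1) = p) :
    sPart (k + 1) hp u = snocZero (sPart k hp u) := by
  apply Subtype.ext
  funext i
  show sFun (k + 1) p u i = (Fin.snoc (sFun k p u) 0 : Fin (k + 2) → ℝ) i
  rcases Nat.eq_or_lt_of_le (Nat.lt_succ_iff.1 i.isLt) with hlast | hlt
  · have hi : i = ⟨k + 1, by omega⟩ := Fin.ext hlast
    rw [hi]
    unfold sFun
    rw [if_pos (by simp), hmid, min_self]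
    have h2 : (⟨k + 1, by omega⟩ : Fin (k + 2)) = Fin.last (k + 1) := rfl
    rw [h2, Fin.snoc_last]
    ring
  · have hi : (i : ℕ) < k + 1 := hlt
    have hieq : i = (⟨(i : ℕ), i.isLt⟩ : Fin (k + 2)) := rfl
    rw [hieq, snoc_mk_lt (sFun k p u) 0 _ hi]
    unfold sFun
    rw [if_neg (by simp; omega)]
    rcases Nat.eq_or_lt_of_le (Nat.lt_succ_iff.1 hi) with hik | hik
    · rw [if_pos (by simpa using hik)]
      simp only [hik, hmid, min_self]
    · rw [if_neg (by simp; omega)]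

lemma tPart_succ_eq (hq : 0 ≤ q) (h : (k + 1) + l = n) (h' : k + (l + 1) = n)
    (u : SSimplex n (p + q)) (hmid : psum u (k + 1) = p) :
    tPart k (l + 1) hq h' u = consZero (tPart (k + 1) l hq h u) := by
  apply Subtype.ext
  funext j
  show tFun k (l + 1) p u j = (Fin.cons 0 (tFun (k + 1) l p u) : Fin (l + 2) → ℝ) j
  rcases Nat.eq_zero_or_pos (j : ℕ) with h0 | hpos
  · have hj : j = (0 : Fin (l + 2)) := Fin.ext h0
    rw [hj, Fin.cons_zero]
    unfold tFun
    simp only [Fin.val_zero, if_true, eq_self_iff_true]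
    rw [hmid, max_self]
    ring
  · have hj : j = (⟨(j : ℕ), j.isLt⟩ : Fin (l + 2)) := rfl
    rw [hj, cons_mk_pos (tFun (k + 1) l p u) 0 _ hpos]
    unfold tFun
    rw [if_neg (by show ¬ ((j:ℕ) = 0); omega)]
    rcases Nat.eq_or_lt_of_le hpos with h1 | h1
    · rw [if_pos (by simp; omega)]
      have e1 : k + (j : ℕ) + 1 = (k + 1) + 1 := by omega
      have e2 : k + (j : ℕ) = k + 1 := by omega
      rw [e1, e2, hmid, max_self]
    · rw [if_neg (by simp; omega)]
      have e1 : k + (j : ℕ) + 1 = (k + 1) + ((j : ℕ) - 1) + 1 := by omega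
      have e2 : k + (j : ℕ) = (k + 1) + ((j : ℕ) - 1) := by omega
      rw [e1, e2]

lemma exists_slab (hp : 0 ≤ p) (hq : 0 ≤ q) (u : SSimplex n (p + q)) :
    ∃ m, m ≤ n ∧ psum u m ≤ p ∧ p ≤ psum u (m + 1) := by
  have hP : p ≤ psum u (n + 1) := by rw [psum_total]; linarith
  have hex : ∃ m, p ≤ psum u (m + 1) := ⟨n, hP⟩
  classical
  refine ⟨Nat.find hex, Nat.find_min' hex hP, ?_, Nat.find_spec hex⟩
  rcases Nat.eq_zero_or_pos (Nat.find hex) with h0 | hpos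
  · rw [h0, psum_zero]; exact hp
  · have hlt := Nat.find_min hex (m := Nat.find hex - 1) (by omega)
    push_neg at hlt
    have e : Nat.find hex - 1 + 1 = Nat.find hex := by omega
    rw [e] at hlt
    exact le_of_lt hlt

end

/-- The prismatic subdivision is a coequalizer, for `p, q > 0` and `n ≥ 0`.
First, for `k + l = n − 1`, the maps `μ^{k+1,l}_{p,q}` and `μ^{k,l+1}_{p,q}` agree on
`((s₀,…,s_k,0), t)` and `(s, (0,t₀,…,t_l))`.  Second, any family of continuous maps
`g_{k,l} : Δᵏ_p × Δˡ_q → Z` (for `k + l = n`) satisfying the corresponding compatibility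
glues uniquely to a continuous map `g : Δⁿ_{p+q} → Z` with `g ∘ μ^{k,l}_{p,q} = g_{k,l}`. -/
theorem prism_coequalizer (p q : ℝ) (hp : 0 < p) (hq : 0 < q) (n : ℕ) :
    (∀ k l, k + l + 1 = n → ∀ (s : SSimplex k p) (t : SSimplex l q),
      castSimplex (show k + 1 + l = k + l + 1 by omega)
          (prismMap (k + 1) l p q (snocZero s, t)) =
        castSimplex rfl (prismMap k (l + 1) p q (s, consZero t))) ∧
    ∀ (Z : Type*) [TopologicalSpace Z]
      (g : ∀ k l, k + l = n → SSimplex k p × SSimplex l q → Z),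
      (∀ k l (h : k + l = n), Continuous (g k l h)) →
      (∀ k l (h : k + l + 1 = n) (s : SSimplex k p) (t : SSimplex l q),
        g (k + 1) l (by omega) (snocZero s, t) = g k (l + 1) (by omega) (s, consZero t)) →
      ∃! G : SSimplex n (p + q) → Z, Continuous G ∧
        ∀ k l (h : k + l = n) (x : SSimplex k p × SSimplex l q),
          G (castSimplex h (prismMap k l p q x)) = g k l h x := by
  constructor
  · intro k l _ s t
    exact prism_boundary s t
  · intro Z _inst g hg hcompat
    classical
    have step : ∀ k l (h : k + l + 1 = n) (u : SSimplex n (p + q)), psum u (k + 1) = p →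
        g (k + 1) l (by omega)
            (sPart (k + 1) hp.le u, tPart (k + 1) l hq.le (by omega) u) =
          g k (l + 1) (by omega)
            (sPart k hp.le u, tPart k (l + 1) hq.le (by omega) u) := by
      intro k l h u hmid
      rw [sPart_succ_eq hp.le u hmid,
        tPart_succ_eq hq.le (show (k + 1) + l = n by omega) (show k + (l + 1) = n by omega) u hmid]
      exact hcompat k l h _ _
    have key : ∀ d k l (h : k + l = n) k' l' (h' : k' + l' = n), k' = k + d →
        ∀ u : SSimplex n (p + q), (∀ j, k < j → j ≤ k' → psum u j = p) →
        g k' l' h' (sPart k' hp.le u, tPart k' l' hq.le h' u)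
          = g k l h (sPart k hp.le u, tPart k l hq.le h u) := by
      intro d
      induction d with
      | zero =>
        intro k l h k' l' h' hd u _
        obtain rfl : k' = k := by omega
        obtain rfl : l' = l := by omega
        rfl
      | succ d ih =>
        intro k l h k' l' h' hd u hcond
        obtain rfl : k' = k + d + 1 := by omega
        have hmid : psum u ((k + d) + 1) = p := hcond (k + d + 1) (by omega) (by omega)
        have hstep := step (k + d) l' (by omega) u hmid
        have hih := ih k l h (k + d) (l' + 1) (by omega) rfl u
          (fun j hj1 hj2 => hcond j hj1 (by omega))
        exact hstep.trans hih
    have agree : ∀ k l (h : k + l = n) k' l' (h' : k' + l' = n) (u : SSimplex n (p + q)),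
        psum u k ≤ p → p ≤ psum u (k + 1) → psum u k' ≤ p → p ≤ psum u (k' + 1) →
        g k' l' h' (sPart k' hp.le u, tPart k' l' hq.le h' u)
          = g k l h (sPart k hp.le u, tPart k l hq.le h u) := by
      intro k l h k' l' h' u h1 h2 h3 h4
      rcases le_total k k' with hle | hle
      · refine key (k' - k) k l h k' l' h' (by omega) u ?_
        intro j hj1 hj2
        exact le_antisymm (le_trans (psum_mono u (by omega : j ≤ k')) h3)
          (le_trans h2 (psum_mono u (by omega : k + 1 ≤ j)))
      · refine (key (k - k') k' l' h' k l h (by omega) u ?_).symm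
        intro j hj1 hj2
        exact le_antisymm (le_trans (psum_mono u (by omega : j ≤ k)) h1)
          (le_trans h4 (psum_mono u (by omega : k' + 1 ≤ j)))
    have hex : ∀ u : SSimplex n (p + q), ∃ m, m ≤ n ∧ psum u m ≤ p ∧ p ≤ psum u (m + 1) :=
      fun u => exists_slab hp.le hq.le u
    choose K hK1 hK2 hK3 using hex
    refine ⟨fun u => g (K u) (n - K u) (by have := hK1 u; omega)
        (sPart (K u) hp.le u, tPart (K u) (n - K u) hq.le (by have := hK1 u; omega) u),
      ⟨?_, ?_⟩, ?_⟩
    · -- continuity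
      refine LocallyFinite.continuous
        (f := fun m : Fin (n + 1) =>
          {u : SSimplex n (p + q) | psum u (m : ℕ) ≤ p ∧ p ≤ psum u ((m : ℕ) + 1)})
        (locallyFinite_of_finite _) ?_ ?_ ?_
      · rw [Set.eq_univ_iff_forall]
        intro u
        exact Set.mem_iUnion.2 ⟨⟨K u, by have := hK1 u; omega⟩, hK2 u, hK3 u⟩
      · intro m
        exact (isClosed_le (continuous_psum _) continuous_const).inter
          (isClosed_le continuous_const (continuous_psum _))
      · intro m
        have hm : (m : ℕ) + (n - (m : ℕ)) = n := by have := m.isLt; omega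
        have hcont : ContinuousOn (fun u : SSimplex n (p + q) =>
            g (m : ℕ) (n - (m : ℕ)) hm
              (sPart (m : ℕ) hp.le u, tPart (m : ℕ) (n - (m : ℕ)) hq.le hm u))
            {u : SSimplex n (p + q) | psum u (m : ℕ) ≤ p ∧ p ≤ psum u ((m : ℕ) + 1)} :=
          ((hg _ _ _).comp ((continuous_sPart _ hp.le).prodMk
            (continuous_tPart _ _ hq.le hm))).continuousOn
        refine hcont.congr ?_
        intro u hu
        exact agree _ _ hm _ _ _ u hu.1 hu.2 (hK2 u) (hK3 u)
    · -- the gluing property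
      intro k l h x
      obtain ⟨s, t⟩ := x
      have hu1 : psum (castSimplex h (prismMap k l p q (s, t))) k ≤ p := by
        rw [psum_prism_k h s t]
        have := s.2.1 (Fin.last k)
        linarith
      have hu2 : p ≤ psum (castSimplex h (prismMap k l p q (s, t))) (k + 1) := by
        rw [psum_prism_k1 h s t]
        have := t.2.1 0
        linarith
      have h1 := agree k l h (K (castSimplex h (prismMap k l p q (s, t))))
        (n - K (castSimplex h (prismMap k l p q (s, t))))
        (by have := hK1 (castSimplex h (prismMap k l p q (s, t))); omega)
        (castSimplex h (prismMap k l p q (s, t))) hu1 hu2 (hK2 _) (hK3 _)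
      have hrec := prism_reconstruct h hp.le hq.le (castSimplex h (prismMap k l p q (s, t))) hu1 hu2
      have hinj := prism_inj h hrec
      refine h1.trans ?_
      rw [hinj.1, hinj.2]
    · -- uniqueness
      intro G' hG'
      funext u
      have hm : K u + (n - K u) = n := by have := hK1 u; omega
      have hrec := prism_reconstruct hm hp.le hq.le u (hK2 u) (hK3 u)
      calc G' u = G' (castSimplex hm (prismMap (K u) (n - K u) p q
            (sPart (K u) hp.le u, tPart (K u) (n - K u) hq.le hm u))) := by rw [hrec]
        _ = g (K u) (n - K u) hm
            (sPart (K u) hp.le u, tPart (K u) (n - K u) hq.le hm u) := hG'.2 _ _ _ _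
        _ = _ := rfl
end

section
/- Parametrized embedding lemma: let C and D be compact Hausdorff topological spaces, let A be any topological space, and let π : ([0,∞) × (0,∞)) × C → D be a continuous map such that for each (p, q) ∈ [0,∞) × (0,∞) the slice π_{p,q} : C → D, x ↦ π((p,q), x), is surjective. Then the map Φ : [0,∞) × (0,∞) × C(D, A) → [0,∞) × (0,∞) × C(C, A) defined by Φ(p, q, f) = (p, q, f ∘ π_{p,q}) is a topological embedding: it is injective and a homeomorphism onto its image. -/
open Topology

/-!
Continuity of `Φ` is continuity of composition `C(C, D) × C(D, A) → C(C, A)`, which holds because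
`D` is locally compact. For the induced topology, fix `(t₀, f)` and a subbasic neighbourhood
`{g | g '' K ⊆ U}` of `f`. The compact set `π_{t₀}⁻¹ K` has a compact neighbourhood `L` that
`f ∘ π_{t₀}` maps into `U`, and by the tube lemma (compactness of `C`) `π_t⁻¹ K ⊆ interior L` for `t`
near `t₀`. So if `t` is near `t₀` and `f' ∘ π_t` maps `L` into `U`, surjectivity of `π_t` gives
`f' '' K ⊆ U`.
-/

section

open Filter Set Function

variable {T C D A : Type*} [TopologicalSpace T] [TopologicalSpace C] [TopologicalSpace D]
  [TopologicalSpace A]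

lemma Continuous.eventually_preimage_slice_subset [CompactSpace C] {π : T × C → D}
    (hπ : Continuous π) {K : Set D} (hK : IsClosed K) {V : Set C} (hV : IsOpen V) {t₀ : T}
    (h : (fun x => π (t₀, x)) ⁻¹' K ⊆ V) :
    ∀ᶠ t in 𝓝 t₀, (fun x => π (t, x)) ⁻¹' K ⊆ V := by
  have hoff : ∀ x ∈ Vᶜ, ∀ᶠ z : T × C in 𝓝 (t₀, x), π (z.1, z.2) ∉ K := fun x hx =>
    (hK.isOpen_compl.preimage hπ).mem_nhds fun hxK => hx (h hxK)
  filter_upwards [hV.isClosed_compl.isCompact.eventually_forall_of_forall_eventually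
    (P := fun t x => π (t, x) ∉ K) hoff] with t ht x hxK
  by_contra hxV
  exact ht x hxV hxK

namespace ContinuousMap

lemma eventually_mapsTo_of_comp_curry_eq [CompactSpace C] [LocallyCompactSpace C] [T2Space D]
    {π : T × C → D} (hπ : Continuous π) (hsurj : ∀ t, Surjective fun x => π (t, x))
    {f : C(D, A)} {K : Set D} (hK : IsCompact K) {U : Set A} (hU : IsOpen U)
    (hf : MapsTo f K U) (t₀ : T) :
    ∀ᶠ y : T × C(C, A) in 𝓝 (t₀, f.comp (curry ⟨π, hπ⟩ t₀)),
      ∀ f' : C(D, A), f'.comp (curry ⟨π, hπ⟩ y.1) = y.2 → MapsTo f' K U := by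
  set σ := curry ⟨π, hπ⟩
  obtain ⟨L, hL, hKL, hLU⟩ := exists_compact_between
    (hK.isClosed.preimage (σ t₀).continuous).isCompact
    ((hU.preimage f.continuous).preimage (σ t₀).continuous) fun x hx => hf hx
  have hslice := hπ.eventually_preimage_slice_subset hK.isClosed isOpen_interior hKL
  have hmaps : ∀ᶠ g : C(C, A) in 𝓝 (f.comp (σ t₀)), MapsTo g L U :=
    (isOpen_setOfPred_mapsTo hL hU).mem_nhds hLU
  filter_upwards [hslice.prod_nhds hmaps] with ⟨t, g⟩ ⟨htK, hgL⟩ f' hf' y hy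
  obtain ⟨x, rfl⟩ := hsurj t y
  rw [← hf'] at hgL
  exact hgL (interior_subset (htK hy))

theorem isEmbedding_prodMk_comp_curry [CompactSpace C] [LocallyCompactSpace C] [T2Space D]
    [LocallyCompactSpace D] {π : T × C → D} (hπ : Continuous π)
    (hsurj : ∀ t, Surjective fun x => π (t, x)) :
    IsEmbedding fun z : T × C(D, A) => (z.1, z.2.comp (curry ⟨π, hπ⟩ z.1)) := by
  set σ := curry ⟨π, hπ⟩
  set Φ : T × C(D, A) → T × C(C, A) := fun z => (z.1, z.2.comp (σ z.1))
  have hΦ : Continuous Φ := continuous_fst.prodMk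
    (continuous_comp'.comp ((σ.continuous.comp continuous_fst).prodMk continuous_snd))
  refine ⟨isInducing_iff_nhds.2 fun ⟨t, f⟩ => le_antisymm (hΦ.tendsto _).le_comap ?_, ?_⟩
  · rw [show 𝓝 (t, f) = 𝓝 t ×ˢ 𝓝 f from nhds_prod_eq, le_prod, tendsto_nhds_compactOpen]
    refine ⟨(continuous_fst.tendsto _).comp tendsto_comap, fun K hK U hU hf => ?_⟩
    refine eventually_comap.2 ((eventually_mapsTo_of_comp_curry_eq hπ hsurj hK hU hf t).mono ?_)
    rintro _ hy ⟨s, f'⟩ rfl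
    exact hy f' rfl
  · rintro ⟨s, f⟩ ⟨s', f'⟩ h
    obtain ⟨rfl, h⟩ := Prod.ext_iff.1 h
    exact Prod.ext rfl (DFunLike.coe_injective ((hsurj s).injective_comp_right
      (congrArg DFunLike.coe h)))

end ContinuousMap

end

/-- Parametrized embedding lemma: let `C` and `D` be compact Hausdorff
spaces, `A` any space, and `π : ([0,∞) × (0,∞)) × C → D` continuous with every slice
`π_{p,q} : C → D` surjective.  Then `Φ(p, q, f) = (p, q, f ∘ π_{p,q})` is a topological
embedding `[0,∞) × (0,∞) × C(D, A) → [0,∞) × (0,∞) × C(C, A)`. -/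
theorem parametrized_precomp_isEmbedding {C D A : Type*} [TopologicalSpace C]
    [TopologicalSpace D] [TopologicalSpace A] [CompactSpace C] [T2Space C]
    [CompactSpace D] [T2Space D]
    (π : ({p : ℝ // 0 ≤ p} × {q : ℝ // 0 < q}) × C → D) (hπ : Continuous π)
    (hsurj : ∀ pq : {p : ℝ // 0 ≤ p} × {q : ℝ // 0 < q},
      Function.Surjective (fun x : C => π (pq, x))) :
    IsEmbedding (fun z : {p : ℝ // 0 ≤ p} × {q : ℝ // 0 < q} × C(D, A) =>
      ((z.1, z.2.1,
        z.2.2.comp ⟨fun x : C => π ((z.1, z.2.1), x),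
          hπ.comp (continuous_const.prodMk continuous_id)⟩) :
        {p : ℝ // 0 ≤ p} × {q : ℝ // 0 < q} × C(C, A))) :=
  (Homeomorph.prodAssoc _ _ _).isEmbedding.comp
    ((ContinuousMap.isEmbedding_prodMk_comp_curry (A := A) hπ hsurj).comp
      (Homeomorph.prodAssoc _ _ _).symm.isEmbedding)
end

section
/- Parametrized embedding lemma, product form: for each n ∈ ℕ let Cₙ and Dₙ be compact Hausdorff topological spaces, Aₙ any topological space, and πⁿ : ([0,∞) × (0,∞)) × Cₙ → Dₙ a continuous map such that for each (p, q) ∈ [0,∞) × (0,∞) the slice πⁿ_{p,q} : Cₙ → Dₙ is surjective. Then the map Φ : [0,∞) × (0,∞) × ∏ₙ C(Dₙ, Aₙ) → [0,∞) × (0,∞) × ∏ₙ C(Cₙ, Aₙ) defined by Φ(p, q, (fₙ)ₙ) = (p, q, (fₙ ∘ πⁿ_{p,q})ₙ) is a topological embedding: it is injective and a homeomorphism onto its image. -/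
/-!
Write `σ_p = π (p, ·)`. Continuity of `(p, f) ↦ (p, f ∘ σ_p)` is continuity of composition in
the compact-open topology. For the converse, given `f₀(K) ⊆ U` with `K` compact, shrink
`V = f₀⁻¹ U` to an open `W ⊇ K` with `closure W ⊆ V`. Since `C` is compact, the parameters `p`
for which some `x` has `σ_p x ∈ K` but `σ_{p₀} x ∉ W` form a closed set missing `p₀`. Near `p₀`,
`K` is therefore covered by `σ_p(L)` with `L = σ_{p₀}⁻¹ (closure W)` compact, so the condition
`(f ∘ σ_p)(L) ⊆ U`, which is open in the target, forces `f(K) ⊆ U`. The countable product is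
reduced to a single factor by distributing the common parameter over the product.
-/

open Filter Set Function Topology

section

variable {P C D : Type*} [TopologicalSpace P] [TopologicalSpace C] [TopologicalSpace D]

theorem exists_mem_nhds_isCompact_mapsTo_subset_image [CompactSpace C] [T3Space D]
    (π : C(P × C, D)) (hsurj : ∀ p, Surjective (π.curry p))
    {K V : Set D} (hK : IsCompact K) (hV : IsOpen V) (hKV : K ⊆ V) (p₀ : P) :
    ∃ N ∈ 𝓝 p₀, ∃ L : Set C, IsCompact L ∧ MapsTo (π.curry p₀) L V ∧
      ∀ p ∈ N, K ⊆ π.curry p '' L := by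
  obtain ⟨W, hWo, hKW, hWV⟩ := hK.exists_isOpen_closure_subset (hV.mem_nhdsSet.2 hKV)
  set E : Set P := Prod.fst '' {y : P × C | π y ∈ K ∧ π (p₀, y.2) ∉ W}
  have hE : IsClosed E := isClosedMap_fst_of_compactSpace _ <|
    (hK.isClosed.preimage π.continuous).inter
      (hWo.preimage (π.continuous.comp (continuous_const.prodMk continuous_snd))).isClosed_compl
  have hp₀E : p₀ ∉ E := by
    rintro ⟨⟨p, x⟩, ⟨hxK, hxW⟩, rfl⟩
    exact hxW (hKW hxK)
  refine ⟨Eᶜ, hE.isOpen_compl.mem_nhds hp₀E, π.curry p₀ ⁻¹' closure W,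
    (isClosed_closure.preimage (map_continuous _)).isCompact, fun x hx => hWV hx, ?_⟩
  intro p hp d hd
  obtain ⟨x, rfl⟩ := hsurj p d
  refine ⟨x, subset_closure ?_, rfl⟩
  by_contra hxW
  exact hp ⟨(p, x), ⟨hd, hxW⟩, rfl⟩

variable {A : Type*} [TopologicalSpace A]

theorem isEmbedding_prodMk_comp_curry [CompactSpace C] [T3Space D] [LocallyCompactPair D A]
    (π : C(P × C, D)) (hsurj : ∀ p, Surjective (π.curry p)) :
    IsEmbedding fun z : P × C(D, A) => (z.1, z.2.comp (π.curry z.1)) := by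
  set Φ := fun z : P × C(D, A) => (z.1, z.2.comp (π.curry z.1))
  have hΦ : Continuous Φ := continuous_fst.prodMk <|
    (ContinuousMap.continuous_comp' (X := C)).comp <|
      (map_continuous π.curry).comp continuous_fst |>.prodMk continuous_snd
  refine ⟨isInducing_iff_nhds.2 fun z => le_antisymm (hΦ.tendsto z).le_comap ?_, ?_⟩
  · refine nhds_prod_eq.ge.trans' <|
      le_prod.2 ⟨(continuous_fst.tendsto (Φ z)).comp tendsto_comap, ?_⟩
    rw [ContinuousMap.tendsto_nhds_compactOpen]
    intro K hK U hU hKU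
    obtain ⟨N, hN, L, hL, hLU, hKL⟩ := exists_mem_nhds_isCompact_mapsTo_subset_image π hsurj hK
      (hU.preimage z.2.continuous) hKU z.1
    have hnear : ∀ᶠ w in 𝓝 (Φ z), w.1 ∈ N ∧ MapsTo w.2 L U :=
      ((continuous_fst.tendsto (Φ z)).eventually_mem hN).and
        ((continuous_snd.tendsto (Φ z)).eventually <|
          ContinuousMap.eventually_mapsTo (f := (Φ z).2) hL hU hLU)
    filter_upwards [hnear.comap Φ] with ⟨p, f⟩ ⟨hp, hfL⟩
    rintro _ hd
    obtain ⟨x, hx, rfl⟩ := hKL p hp hd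
    exact hfL hx
  · rintro ⟨p, f⟩ ⟨p', f'⟩ h
    obtain ⟨rfl, h⟩ := Prod.mk.inj h
    refine Prod.ext rfl <| ContinuousMap.ext fun d => ?_
    obtain ⟨x, rfl⟩ := hsurj p d
    exact DFunLike.congr_fun h x

end

section

variable {ι P : Type*} {X Y : ι → Type*} [TopologicalSpace P] [∀ i, TopologicalSpace (X i)]
  [∀ i, TopologicalSpace (Y i)]

theorem isEmbedding_prod_pi_distrib [Nonempty ι] :
    IsEmbedding fun z : P × (∀ i, X i) => fun i => (z.1, z.2 i) :=
  LeftInverse.isEmbedding (f := fun w => ((w (Classical.arbitrary ι)).1, fun i => (w i).2))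
    (fun _ => rfl)
    ((continuous_apply _).fst.prodMk (continuous_pi fun i => (continuous_apply i).snd))
    (continuous_pi fun i => continuous_fst.prodMk ((continuous_apply i).comp continuous_snd))

theorem isEmbedding_prodMk_pi [Nonempty ι] (g : ∀ i, P → X i → Y i)
    (hg : ∀ i, IsEmbedding fun z : P × X i => (z.1, g i z.1 z.2)) :
    IsEmbedding fun z : P × (∀ i, X i) => (z.1, fun i => g i z.1 (z.2 i)) := by
  have hcont : Continuous fun z : P × (∀ i, X i) => (z.1, fun i => g i z.1 (z.2 i)) :=
    continuous_fst.prodMk <| continuous_pi fun i => continuous_snd.comp <|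
      (hg i).continuous.comp <| continuous_fst.prodMk <| (continuous_apply i).comp continuous_snd
  refine .of_comp hcont isEmbedding_prod_pi_distrib.continuous ?_
  exact (IsEmbedding.piMap hg).comp isEmbedding_prod_pi_distrib

end

theorem parametrized_precomp_pi_isEmbedding_general {C D A : ℕ → Type*}
    [∀ n, TopologicalSpace (C n)] [∀ n, TopologicalSpace (D n)] [∀ n, TopologicalSpace (A n)]
    [∀ n, CompactSpace (C n)] [∀ n, CompactSpace (D n)] [∀ n, T2Space (D n)]
    (π : ∀ n, ({p : ℝ // 0 ≤ p} × {q : ℝ // 0 < q}) × C n → D n)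
    (hπ : ∀ n, Continuous (π n))
    (hsurj : ∀ n, ∀ pq : {p : ℝ // 0 ≤ p} × {q : ℝ // 0 < q},
      Function.Surjective (fun x : C n => π n (pq, x))) :
    IsEmbedding (fun z : {p : ℝ // 0 ≤ p} × {q : ℝ // 0 < q} × (∀ n, C(D n, A n)) =>
      ((z.1, z.2.1, fun n =>
        (z.2.2 n).comp ⟨fun x : C n => π n ((z.1, z.2.1), x),
          (hπ n).comp (continuous_const.prodMk continuous_id)⟩) :
        {p : ℝ // 0 ≤ p} × {q : ℝ // 0 < q} × (∀ n, C(C n, A n)))) := by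
  have hΦ := isEmbedding_prodMk_pi
    (fun n pq (f : C(D n, A n)) => f.comp (ContinuousMap.curry ⟨π n, hπ n⟩ pq))
    fun n => isEmbedding_prodMk_comp_curry ⟨π n, hπ n⟩ (hsurj n)
  exact (Homeomorph.prodAssoc _ _ _).isEmbedding.comp
    (hΦ.comp (Homeomorph.prodAssoc _ _ _).symm.isEmbedding)

/-- Parametrized embedding lemma, product form: for families of compact
Hausdorff spaces `Cₙ`, `Dₙ`, arbitrary spaces `Aₙ`, and continuous maps
`πⁿ : ([0,∞) × (0,∞)) × Cₙ → Dₙ` whose slices `πⁿ_{p,q}` are all surjective, the map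
`Φ(p, q, (fₙ)ₙ) = (p, q, (fₙ ∘ πⁿ_{p,q})ₙ)` is a topological embedding
`[0,∞) × (0,∞) × ∏ₙ C(Dₙ, Aₙ) → [0,∞) × (0,∞) × ∏ₙ C(Cₙ, Aₙ)`. -/
theorem parametrized_precomp_pi_isEmbedding {C D A : ℕ → Type*}
    [∀ n, TopologicalSpace (C n)] [∀ n, TopologicalSpace (D n)] [∀ n, TopologicalSpace (A n)]
    [∀ n, CompactSpace (C n)] [∀ n, T2Space (C n)] [∀ n, CompactSpace (D n)] [∀ n, T2Space (D n)]
    (π : ∀ n, ({p : ℝ // 0 ≤ p} × {q : ℝ // 0 < q}) × C n → D n)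
    (hπ : ∀ n, Continuous (π n))
    (hsurj : ∀ n, ∀ pq : {p : ℝ // 0 ≤ p} × {q : ℝ // 0 < q},
      Function.Surjective (fun x : C n => π n (pq, x))) :
    IsEmbedding (fun z : {p : ℝ // 0 ≤ p} × {q : ℝ // 0 < q} × (∀ n, C(D n, A n)) =>
      ((z.1, z.2.1, fun n =>
        (z.2.2 n).comp ⟨fun x : C n => π n ((z.1, z.2.1), x),
          (hπ n).comp (continuous_const.prodMk continuous_id)⟩) :
        {p : ℝ // 0 ≤ p} × {q : ℝ // 0 < q} × (∀ n, C(C n, A n)))) :=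
  parametrized_precomp_pi_isEmbedding_general π hπ hsurj
end
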